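/- arXiv:2201.01941 — 5 statements merged into one kernel-verified Lean document; each statement's English description precedes it below -/
import Mathlib

section
/- If f(s) = (1-s)^{1+ν} L(1/(1-s)) for 0 ≤ s < 1 where 0 < ν ≤ 1 and L is slowly varying at infinity, and additionally f''(1⁻) exists and is finite with f(1)=f'(1)=0, then ν = 1 and L(t) → f''(1⁻)/2 as t → ∞. -/
open Filter Set Topology

/-!
Substituting `s = 1 - 1/t`, the criticality limit says `g t = t ^ (1 - ν) * L t → c/2`.
Since `L` is slowly varying, `g (2t) / g t → 2 ^ (1 - ν)`; a positive function with a finite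
limit cannot grow by a factor `> 1` under doubling, so `2 ^ (1 - ν) ≤ 1`, i.e. `ν = 1`, and
then `g = L`.
-/

theorem tendsto_one_sub_inv_atTop_nhdsLT :
    Tendsto (fun t : ℝ => 1 - t⁻¹) atTop (𝓝[<] 1) := by
  refine tendsto_nhdsWithin_iff.2 ⟨?_, ?_⟩
  · simpa using (tendsto_const_nhds (x := (1:ℝ))).sub tendsto_inv_atTop_zero
  · filter_upwards [eventually_gt_atTop 0] with t ht
    simpa using ht

theorem tendsto_rpow_mul_comp_mul_div {L : ℝ → ℝ} {l p : ℝ} (hl : 0 < l)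
    (hL : Tendsto (fun x => L (l * x) / L x) atTop (𝓝 1)) :
    Tendsto (fun t => (l * t) ^ p * L (l * t) / (t ^ p * L t)) atTop (𝓝 (l ^ p)) := by
  have hlim : Tendsto (fun t => l ^ p * (L (l * t) / L t)) atTop (𝓝 (l ^ p)) := by
    simpa using hL.const_mul (l ^ p)
  refine hlim.congr' ?_
  filter_upwards [eventually_gt_atTop 0] with t ht
  rw [mul_div_mul_comm, Real.mul_rpow hl.le ht.le,
    mul_div_cancel_right₀ _ (Real.rpow_pos_of_pos ht p).ne']

/-- If `r > 1`, then `g` increases along `T, l T, l² T, …`, so its limit is positive and the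
ratio tends to `1` instead. -/
theorem le_one_of_tendsto_comp_mul_div {g : ℝ → ℝ} {a r l : ℝ} (hl : 1 < l)
    (hpos : ∀ᶠ t in atTop, 0 < g t) (hg : Tendsto g atTop (𝓝 a))
    (hr : Tendsto (fun t => g (l * t) / g t) atTop (𝓝 r)) : r ≤ 1 := by
  by_contra! hr1
  have hl0 : 0 < l := zero_lt_one.trans hl
  have hscale : Tendsto (fun t => l * t) atTop atTop := tendsto_id.const_mul_atTop hl0
  obtain ⟨T, hT⟩ := (((hr.eventually (eventually_gt_nhds hr1)).and hpos).and
    (eventually_gt_atTop 0)).exists_forall_of_atTop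
  have hT0 : 0 < T := (hT T le_rfl).2
  have hstep : ∀ t ≥ T, g t ≤ g (l * t) := fun t ht => by
    obtain ⟨⟨hratio, hgt⟩, -⟩ := hT t ht
    exact ((one_lt_div hgt).1 hratio).le
  have horbit : ∀ n : ℕ, g T ≤ g (l ^ n * T) := by
    intro n
    induction n with
    | zero => simp
    | succ n ih =>
      rw [pow_succ, mul_comm _ l, mul_assoc]
      exact ih.trans (hstep _ (le_mul_of_one_le_left hT0.le (one_le_pow₀ hl.le)))
  have ha : 0 < a := by
    have hseq : Tendsto (fun n : ℕ => g (l ^ n * T)) atTop (𝓝 a) :=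
      hg.comp ((tendsto_pow_atTop_atTop_of_one_lt hl).atTop_mul_const hT0)
    exact (hT T le_rfl).1.2.trans_le (ge_of_tendsto' hseq horbit)
  have hone : Tendsto (fun t => g (l * t) / g t) atTop (𝓝 1) := by
    have := (hg.comp hscale).div hg ha.ne'
    rwa [div_self ha.ne'] at this
  exact hr1.ne (tendsto_nhds_unique hone hr)

theorem div_sq_one_sub_inv_eq {f L : ℝ → ℝ} {ν : ℝ}
    (hf : ∀ s : ℝ, 0 ≤ s → s < 1 → f s = (1 - s) ^ (1 + ν) * L (1 / (1 - s)))
    {t : ℝ} (ht : 1 ≤ t) :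
    f (1 - t⁻¹) / (1 - (1 - t⁻¹)) ^ (2:ℕ) = t ^ (1 - ν) * L t := by
  have ht0 : 0 < t := zero_lt_one.trans_le ht
  rw [hf _ (sub_nonneg.2 (inv_le_one_of_one_le₀ ht)) (sub_lt_self 1 (inv_pos.2 ht0)),
    sub_sub_cancel, one_div, inv_inv, Real.inv_rpow ht0.le, inv_pow, div_inv_eq_mul,
    ← Real.rpow_neg ht0.le, mul_right_comm, ← Real.rpow_natCast, ← Real.rpow_add ht0]
  congr 2
  ring

theorem stmt0_general (f L : ℝ → ℝ) (ν c : ℝ) (hν1 : ν ≤ 1)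
    (hLpos : ∀ x > (0:ℝ), 0 < L x)
    (hSV : ∀ l > (0:ℝ), Tendsto (fun x => L (l * x) / L x) atTop (nhds 1))
    (hf : ∀ s : ℝ, 0 ≤ s → s < 1 → f s = (1 - s) ^ (1 + ν) * L (1 / (1 - s)))
    (hcrit : Tendsto (fun s => f s / (1 - s) ^ (2:ℕ)) (nhdsWithin 1 (Iio 1)) (nhds (c / 2))) :
    ν = 1 ∧ Tendsto L atTop (nhds (c / 2)) := by
  have hg : Tendsto (fun t => t ^ (1 - ν) * L t) atTop (𝓝 (c / 2)) :=
    (hcrit.comp tendsto_one_sub_inv_atTop_nhdsLT).congr'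
      ((eventually_ge_atTop 1).mono fun t ht => div_sq_one_sub_inv_eq hf ht)
  have hgpos : ∀ᶠ t in atTop, 0 < t ^ (1 - ν) * L t :=
    (eventually_gt_atTop 0).mono fun t ht => mul_pos (Real.rpow_pos_of_pos ht _) (hLpos t ht)
  have hpow : (2:ℝ) ^ (1 - ν) ≤ 1 :=
    le_one_of_tendsto_comp_mul_div one_lt_two hgpos hg
      (tendsto_rpow_mul_comp_mul_div two_pos (hSV 2 two_pos))
  have hν : ν = 1 := by
    have := (Real.rpow_le_one_iff_of_pos two_pos).1 hpow
    norm_num at this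
    linarith
  refine ⟨hν, ?_⟩
  simpa [hν] using hg

/-- If `f(s) = (1-s)^{1+ν} L(1/(1-s))` on `[0,1)` with `0 < ν ≤ 1` and `L` slowly varying
at infinity, and moreover `f(s)/(1-s)^2 → c/2` as `s ↑ 1` (i.e. `f''(1⁻) = c` is finite,
criticality `f(1) = f'(1) = 0`), then `ν = 1` and `L(t) → c/2` as `t → ∞`. -/
theorem stmt0 (f L : ℝ → ℝ) (ν c : ℝ) (hν : 0 < ν) (hν1 : ν ≤ 1)
    (hLpos : ∀ x > (0:ℝ), 0 < L x)
    (hSV : ∀ l > (0:ℝ), Tendsto (fun x => L (l * x) / L x) atTop (nhds 1))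
    (hf : ∀ s : ℝ, 0 ≤ s → s < 1 → f s = (1 - s) ^ (1 + ν) * L (1 / (1 - s)))
    (hcrit : Tendsto (fun s => f s / (1 - s) ^ (2:ℕ)) (nhdsWithin 1 (Iio 1)) (nhds (c / 2))) :
    ν = 1 ∧ Tendsto L atTop (nhds (c / 2)) :=
  stmt0_general f L ν c hν1 hLpos hSV hf hcrit
end

section
/- Let F(t;s) solve ∂F/∂t = f(F), F(0;s)=s, on [0,∞), where f has a simple zero at q with f'(q) < 0 and f(u) > 0 for s ≤ u < q. Then R(t;s) := q − F(t;s) satisfies R(t;s) = A(t;s)·β^t where β = exp(f'(q)) and A(t;s) = (q−s)·exp(∫_s^{F(t;s)} [1/(u−q) − f'(q)/f(u)] du). -/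
open Filter Set intervalIntegral

/-!
The substitution `u = F τ`, `du = f (F τ) dτ` turns the integrand `1 / (u - q) - c / f u` into
`f (F τ) / (F τ - q) - c`, the derivative of `τ ↦ log (q - F τ) - c τ`. Hence the integral in
the exponent equals `log ((q - F t) / (q - s)) - c t`, and exponentiating gives the identity.
Since `f` need not be continuous, integrability comes from monotonicity (a derivative bounded on
one side is integrable) rather than from continuity.
-/

theorem integral_eq_sub_of_hasDerivAt_of_le_of_deriv_le {G G' : ℝ → ℝ} {a b C : ℝ}
    (hab : a ≤ b) (hcont : ContinuousOn G (Icc a b))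
    (hderiv : ∀ x ∈ Ioo a b, HasDerivAt G (G' x) x) (hle : ∀ x ∈ Ioo a b, G' x ≤ C) :
    ∫ x in a..b, G' x = G b - G a := by
  have hdom : IntervalIntegrable (fun x => C - G' x) MeasureTheory.volume a b := by
    refine intervalIntegrable_deriv_of_nonneg (g := fun x => C * x - G x) ?_ ?_ ?_ <;>
      simp only [uIcc_of_le hab, min_eq_left hab, max_eq_right hab]
    · exact (continuousOn_const.mul continuousOn_id).sub hcont
    · exact fun x hx => by
        simpa only [mul_one] using ((hasDerivAt_id' x).const_mul C).fun_sub (hderiv x hx)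
    · exact fun x hx => sub_nonneg.2 (hle x hx)
  refine integral_eq_sub_of_hasDerivAt_of_le hab hcont hderiv ?_
  simpa only [sub_sub_cancel] using (intervalIntegrable_const (c := C)).sub hdom

theorem integral_div_sub_sub_eq_log {F F' : ℝ → ℝ} {a b q c : ℝ} (hab : a ≤ b)
    (hF : ∀ τ ∈ Icc a b, HasDerivAt F (F' τ) τ) (hF' : ∀ τ ∈ Icc a b, 0 ≤ F' τ)
    (hFq : ∀ τ ∈ Icc a b, F τ < q) :
    ∫ τ in a..b, (F' τ / (F τ - q) - c)
      = Real.log (q - F b) - Real.log (q - F a) - c * (b - a) := by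
  have hG : ∀ τ ∈ Icc a b, HasDerivAt (fun τ => Real.log (q - F τ) - c * τ)
      (F' τ / (F τ - q) - c) τ := by
    intro τ hτ
    refine ((((hF τ hτ).const_sub q).log (sub_pos.2 (hFq τ hτ)).ne').fun_sub
      ((hasDerivAt_id' τ).const_mul c)).congr_deriv ?_
    rw [mul_one, neg_div, ← div_neg, neg_sub]
  rw [integral_eq_sub_of_hasDerivAt_of_le_of_deriv_le (C := -c) hab
    (fun τ hτ => (hG τ hτ).continuousAt.continuousWithinAt)
    (fun τ hτ => hG τ (Ioo_subset_Icc_self hτ)) (fun τ hτ => ?_)]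
  · ring
  have hτ := Ioo_subset_Icc_self hτ
  rw [sub_eq_add_neg]
  exact add_le_of_nonpos_left
    (div_nonpos_of_nonneg_of_nonpos (hF' τ hτ) (sub_nonpos.2 (hFq τ hτ).le))

theorem integral_inv_sub_sub_div_eq_log {f F : ℝ → ℝ} {a b q c : ℝ} (hab : a ≤ b)
    (hF : ∀ τ ∈ Icc a b, HasDerivAt F (f (F τ)) τ) (hf : ∀ τ ∈ Icc a b, 0 < f (F τ))
    (hFq : ∀ τ ∈ Icc a b, F τ < q) :
    ∫ u in F a..F b, (1 / (u - q) - c / f u)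
      = Real.log (q - F b) - Real.log (q - F a) - c * (b - a) := by
  have hIoo : Ioo (min a b) (max a b) ⊆ Icc a b := by
    rw [min_eq_left hab, max_eq_right hab]
    exact Ioo_subset_Icc_self
  rw [← integral_comp_mul_deriv_of_deriv_nonneg (f' := fun τ => f (F τ))
      (fun τ hτ => (hF τ (uIcc_of_le hab ▸ hτ)).continuousAt.continuousWithinAt)
      (fun τ hτ => hF τ (hIoo hτ)) (fun τ hτ => (hf τ (hIoo hτ)).le),
    ← integral_div_sub_sub_eq_log hab hF (fun τ hτ => (hf τ hτ).le) hFq]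
  refine integral_congr fun τ hτ => ?_
  have hfτ := (hf τ (uIcc_of_le hab ▸ hτ)).ne'
  simp only [Function.comp_apply]
  field_simp

theorem stmt2_general (f F : ℝ → ℝ) (q s c : ℝ) (hsq : s < q)
    (hfpos : ∀ u, s ≤ u → u < q → 0 < f u)
    (hF0 : F 0 = s)
    (hode : ∀ t : ℝ, 0 ≤ t → HasDerivAt F (f (F t)) t)
    (hrange : ∀ t : ℝ, 0 ≤ t → s ≤ F t ∧ F t < q) :
    ∀ t : ℝ, 0 ≤ t →
      q - F t =
        ((q - s) * Real.exp (∫ u in s..F t, (1 / (u - q) - c / f u))) * Real.exp c ^ t := by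
  intro t ht
  have hexponent := integral_inv_sub_sub_div_eq_log (c := c) ht (fun τ hτ => hode τ hτ.1)
    (fun τ hτ => hfpos _ (hrange τ hτ.1).1 (hrange τ hτ.1).2) (fun τ hτ => (hrange τ hτ.1).2)
  rw [hF0, sub_zero] at hexponent
  rw [hexponent, ← Real.exp_mul, mul_assoc, ← Real.exp_add, sub_add_cancel, Real.exp_sub,
    Real.exp_log (sub_pos.2 (hrange t ht).2), Real.exp_log (sub_pos.2 hsq),
    mul_div_cancel₀ _ (sub_pos.2 hsq).ne']

/-- Let `F` solve `F' = f(F)`, `F(0) = s`, where `f` has a simple zero at `q` with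
`f'(q) = c < 0` and `f(u) > 0` for `s ≤ u < q`. Then `R(t) := q − F(t)` satisfies
`R(t) = A(t)·β^t` where `β = exp(f'(q))` and
`A(t) = (q−s)·exp(∫_s^{F(t)} [1/(u−q) − f'(q)/f(u)] du)`. -/
theorem stmt2 (f F : ℝ → ℝ) (q s c : ℝ) (hs : 0 ≤ s) (hsq : s < q)
    (hfq : f q = 0) (hfq' : HasDerivAt f c q) (hc : c < 0)
    (hfpos : ∀ u, s ≤ u → u < q → 0 < f u)
    (hF0 : F 0 = s)
    (hode : ∀ t : ℝ, 0 ≤ t → HasDerivAt F (f (F t)) t)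
    (hmono : MonotoneOn F (Ici 0))
    (hrange : ∀ t : ℝ, 0 ≤ t → s ≤ F t ∧ F t < q)
    (hlim : Tendsto F atTop (nhds q)) :
    ∀ t : ℝ, 0 ≤ t →
      q - F t =
        ((q - s) * Real.exp (∫ u in s..F t, (1 / (u - q) - c / f u))) * Real.exp c ^ t :=
  stmt2_general f F q s c hsq hfpos hF0 hode hrange
end

section
/- Let ℓ be slowly varying at infinity and locally bounded on [A,∞) for some A > 0. Then for every λ > −1, ∫_A^x u^λ ℓ(u) du ∼ x^{λ+1} ℓ(x)/(λ+1) as x → ∞. -/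
/-!
Put `h s = log ℓ (eˢ)`; slow variation says exactly that `h (s + t) - h s → 0` for each `t`.
For measurable `h` this convergence is uniform for `t ∈ [0, 1]` (the uniform convergence
theorem): the increments converge to `0` in measure on `[0, 2]`, so for large `s`
the sets where `h (s + ·) - h s` resp. `h (s + t + ·) - h (s + t)` is not small cannot cover
`[0, 1]`, since each has measure `< 1/2`; at a point outside both the two increments combine
into `h (s + t) - h s`. Chaining unit steps gives `|h s' - h s| ≤ ε (s' - s + 1)`, i.e. the Potter
bounds `e^{-ε} (u/x)^ε ≤ ℓ u / ℓ x ≤ e^ε (u/x)^{-ε}` for `X ≤ u ≤ x`. Integrating them against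
`u^λ` over `[X, x]` squeezes `∫_X^x u^λ ℓ u du / (x^{λ+1} ℓ x)` between quantities tending to
`1/(λ+1)` as `ε → 0`, while the contribution of `[A, X]` is negligible because
`x^{λ+1} ℓ x → ∞`.
-/

open Filter Set intervalIntegral MeasureTheory Topology Real

theorem tendstoInMeasure_of_tendsto_ae_of_isCountablyGenerated {α ι E : Type*}
    [MeasurableSpace α] {μ : Measure α} [IsFiniteMeasure μ] [PseudoEMetricSpace E]
    {l : Filter ι} [l.IsCountablyGenerated] {f : ι → α → E} {g : α → E}
    (hf : ∀ i, AEStronglyMeasurable (f i) μ)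
    (hfg : ∀ᵐ x ∂μ, Tendsto (fun i => f i x) l (𝓝 (g x))) :
    TendstoInMeasure μ f l g := fun ε hε =>
  tendsto_of_seq_tendsto fun is his =>
    tendstoInMeasure_of_tendsto_ae (fun n => hf (is n))
      (hfg.mono fun _ hx => hx.comp his) ε hε

theorem tendstoUniformlyOn_add_sub_of_measurable {h : ℝ → ℝ} (hm : Measurable h)
    (hconv : ∀ u, Tendsto (fun x => h (x + u) - h x) atTop (𝓝 0)) :
    TendstoUniformlyOn (fun x t => h (x + t) - h x) 0 atTop (Icc 0 1) := by
  rw [Metric.tendstoUniformlyOn_iff]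
  intro ε hε
  set bad : ℝ → Set ℝ := fun x =>
    {u | ENNReal.ofReal (ε / 2) ≤ edist (h (x + u) - h x) 0} ∩ Icc 0 2
  have hsmall : ∀ᶠ x in atTop, volume (bad x) < 2⁻¹ := by
    have := tendstoInMeasure_of_tendsto_ae_of_isCountablyGenerated
      (μ := volume.restrict (Icc (0:ℝ) 2)) (g := fun _ => 0)
      (fun x => ((hm.comp (measurable_const_add _)).sub measurable_const).aestronglyMeasurable)
      (ae_of_all _ hconv) _ (by positivity : 0 < ENNReal.ofReal (ε / 2))
    simp only [Measure.restrict_apply' measurableSet_Icc] at this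
    exact this.eventually_lt_const (by norm_num)
  obtain ⟨X, hX⟩ := eventually_atTop.1 hsmall
  filter_upwards [eventually_ge_atTop X] with x hx t ht
  have hgood : ∃ v ∈ Icc (0:ℝ) 1, t + v ∉ bad x ∧ v ∉ bad (x + t) := by
    by_contra! hcover
    have hsub : Icc (0:ℝ) 1 ⊆ (fun v => t + v) ⁻¹' bad x ∪ bad (x + t) := fun v hv =>
      or_iff_not_imp_left.2 (hcover v hv)
    have := (measure_mono (μ := volume) hsub).trans (measure_union_le _ _)
    rw [measure_preimage_add, Real.volume_Icc, sub_zero, ENNReal.ofReal_one] at this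
    have := this.trans_lt (ENNReal.add_lt_add (hX x hx) (hX (x + t) (by linarith [ht.1])))
    rw [ENNReal.inv_two_add_inv_two] at this
    exact lt_irrefl _ this
  obtain ⟨v, hv, hv₁, hv₂⟩ := hgood
  have habs_lt_of_notMem : ∀ y u, u ∈ Icc (0:ℝ) 2 → u ∉ bad y → |h (y + u) - h y| < ε / 2 :=
    fun y u hu hbad => by
      have : edist (h (y + u) - h y) 0 < ENNReal.ofReal (ε / 2) :=
        not_le.1 fun hle => hbad ⟨hle, hu⟩
      rwa [edist_lt_ofReal, Real.dist_0_eq_abs] at this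
  have e₁ := habs_lt_of_notMem x (t + v) ⟨by linarith [ht.1, hv.1], by linarith [ht.2, hv.2]⟩ hv₁
  have e₂ := habs_lt_of_notMem (x + t) v ⟨hv.1, by linarith [hv.2]⟩ hv₂
  rw [← add_assoc] at e₁
  rw [Pi.zero_apply, Real.dist_eq, zero_sub, abs_neg]
  calc |h (x + t) - h x| ≤ |h (x + t) - h (x + t + v)| + |h (x + t + v) - h x| := abs_sub_le _ _ _
    _ < ε := by rw [abs_sub_comm]; linarith

theorem abs_sub_le_mul_add_one_of_forall_Icc {h : ℝ → ℝ} {X ε : ℝ}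
    (hstep : ∀ x, X ≤ x → ∀ t ∈ Icc (0:ℝ) 1, |h (x + t) - h x| ≤ ε) :
    ∀ x, X ≤ x → ∀ s, 0 ≤ s → |h (x + s) - h x| ≤ ε * (s + 1) := by
  have hε : 0 ≤ ε := by simpa using hstep X le_rfl 0 ⟨le_rfl, zero_le_one⟩
  have hnat : ∀ n : ℕ, ∀ x, X ≤ x → ∀ s ∈ Icc (0:ℝ) n, |h (x + s) - h x| ≤ ε * n := by
    intro n
    induction n with
    | zero =>
      intro x _ s hs
      simp [le_antisymm (by exact_mod_cast hs.2) hs.1]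
    | succ n ih =>
      intro x hx s hs
      rcases le_or_gt s 1 with hs1 | hs1
      · refine (hstep x hx s ⟨hs.1, hs1⟩).trans (le_mul_of_one_le_right hε ?_)
        exact_mod_cast Nat.succ_pos n
      · have h₁ := hstep x hx 1 ⟨zero_le_one, le_rfl⟩
        have h₂ := ih (x + 1) (by linarith) (s - 1)
          ⟨by linarith, by push_cast at hs; linarith [hs.2]⟩
        rw [show x + 1 + (s - 1) = x + s by ring] at h₂
        calc |h (x + s) - h x| ≤ |h (x + s) - h (x + 1)| + |h (x + 1) - h x| := abs_sub_le _ _ _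
          _ ≤ ε * n + ε := add_le_add h₂ h₁
          _ = ε * (n + 1 : ℕ) := by push_cast; ring
  intro x hx s hs
  refine (hnat ⌈s⌉₊ x hx s ⟨hs, Nat.le_ceil s⟩).trans (mul_le_mul_of_nonneg_left ?_ hε)
  exact (Nat.ceil_lt_add_one hs).le

theorem integral_rpow_mul_div_rpow {a b r s : ℝ} (ha : 0 < a) (hab : a ≤ b) (hrs : -1 < r + s) :
    ∫ u in a..b, u ^ r * (u / b) ^ s = b ^ (r + 1) * (1 - (a / b) ^ (r + s + 1)) / (r + s + 1) := by
  have hb : 0 < b := ha.trans_le hab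
  have hrs' : 0 < r + s + 1 := by linarith
  calc ∫ u in a..b, u ^ r * (u / b) ^ s = ∫ u in a..b, (b ^ s)⁻¹ * u ^ (r + s) := by
        refine integral_congr fun u hu => ?_
        have hu : 0 < u := ha.trans_le (by simpa [hab] using hu.1)
        rw [div_rpow hu.le hb.le, rpow_add hu]
        ring
    _ = (b ^ s)⁻¹ * ((b ^ (r + s + 1) - a ^ (r + s + 1)) / (r + s + 1)) := by
        rw [intervalIntegral.integral_const_mul, integral_rpow (Or.inl hrs)]
    _ = b ^ (r + 1) * (1 - (a / b) ^ (r + s + 1)) / (r + s + 1) := by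
        rw [div_rpow ha.le hb.le, show r + s + 1 = (r + 1) + s by ring, rpow_add hb]
        have : 0 < b ^ s := by positivity
        have : 0 < b ^ (r + 1) := by positivity
        field_simp

theorem intervalIntegrable_of_abs_le {f : ℝ → ℝ} {a b C : ℝ} (hf : Measurable f) (hab : a ≤ b)
    (hC : ∀ x ∈ Icc a b, |f x| ≤ C) : IntervalIntegrable f volume a b := by
  refine (intervalIntegrable_const (c := C)).mono_fun' hf.aestronglyMeasurable ?_
  refine (ae_restrict_iff' measurableSet_uIoc).2 (ae_of_all _ fun x hx => ?_)
  rw [uIoc_of_le hab] at hx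
  exact hC x (Ioc_subset_Icc_self hx)

theorem div_integral_rpow_mul_mem_Icc {ℓ : ℝ → ℝ} {X x lam ε : ℝ} (hX : 0 < X) (hXx : X ≤ x)
    (hℓx : 0 < ℓ x) (hε : ε < lam + 1) (hlam : -1 < lam + ε)
    (hint : IntervalIntegrable (fun u => u ^ lam * ℓ u) volume X x)
    (hpotter : ∀ u ∈ Icc X x,
      exp (-ε) * (u / x) ^ ε * ℓ x ≤ ℓ u ∧ ℓ u ≤ exp ε * (u / x) ^ (-ε) * ℓ x) :
    (∫ u in X..x, u ^ lam * ℓ u) / (x ^ (lam + 1) * ℓ x) ∈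
      Icc (exp (-ε) * (1 - (X / x) ^ (lam + ε + 1)) / (lam + ε + 1)) (exp ε / (lam + 1 - ε)) := by
  have hx : 0 < x := hX.trans_le hXx
  have hD : 0 < x ^ (lam + 1) * ℓ x := by positivity
  have hpow : ∀ u ∈ Icc X x, 0 ≤ u ^ lam := fun u hu => rpow_nonneg (hX.le.trans hu.1) _
  have hbound_integrable : ∀ c (s : ℝ),
      IntervalIntegrable (fun u => c * (u ^ lam * (u / x) ^ s)) volume X x :=
    fun c s => by
      have hne : ∀ u ∈ uIcc X x, u ≠ 0 := fun u hu =>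
        (hX.trans_le (uIcc_of_le hXx ▸ hu).1).ne'
      refine ContinuousOn.intervalIntegrable (continuousOn_const.mul (ContinuousOn.mul ?_ ?_))
      · exact continuousOn_id.rpow_const fun u hu => Or.inl (hne u hu)
      · exact (continuousOn_id.div_const x).rpow_const fun u hu =>
          Or.inl (div_ne_zero (hne u hu) hx.ne')
  have hlow : ∫ u in X..x, exp (-ε) * ℓ x * (u ^ lam * (u / x) ^ ε) ≤ ∫ u in X..x, u ^ lam * ℓ u :=
    integral_mono_on hXx (hbound_integrable (exp (-ε) * ℓ x) ε) hint fun u hu => by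
      nlinarith [mul_le_mul_of_nonneg_left (hpotter u hu).1 (hpow u hu)]
  have hup : ∫ u in X..x, u ^ lam * ℓ u ≤ ∫ u in X..x, exp ε * ℓ x * (u ^ lam * (u / x) ^ (-ε)) :=
    integral_mono_on hXx hint (hbound_integrable (exp ε * ℓ x) (-ε)) fun u hu => by
      nlinarith [mul_le_mul_of_nonneg_left (hpotter u hu).2 (hpow u hu)]
  rw [intervalIntegral.integral_const_mul, integral_rpow_mul_div_rpow hX hXx hlam] at hlow
  rw [intervalIntegral.integral_const_mul, integral_rpow_mul_div_rpow hX hXx (by linarith),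
    show lam + -ε + 1 = lam + 1 - ε by ring] at hup
  have hε' : 0 < lam + 1 - ε := by linarith
  constructor
  · rw [le_div_iff₀ hD]
    calc _ = exp (-ε) * ℓ x * (x ^ (lam + 1) * (1 - (X / x) ^ (lam + ε + 1)) / (lam + ε + 1)) := by
          ring
      _ ≤ _ := hlow
  · rw [div_le_iff₀ hD]
    calc _ ≤ _ := hup
      _ ≤ exp ε * ℓ x * (x ^ (lam + 1) * 1 / (lam + 1 - ε)) := by
          gcongr
          exact sub_le_self _ (by positivity)
      _ = exp ε / (lam + 1 - ε) * (x ^ (lam + 1) * ℓ x) := by ring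

theorem tendsto_of_forall_eventually_mem_Icc {α ι β : Type*} [TopologicalSpace β] [LinearOrder β]
    [OrderTopology β] {l : Filter α} {p : Filter ι} [p.NeBot] {f : α → β} {φ ψ : ι → β} {c : β}
    (hφ : Tendsto φ p (𝓝 c)) (hψ : Tendsto ψ p (𝓝 c))
    (h : ∀ᶠ i in p, ∀ᶠ x in l, f x ∈ Icc (φ i) (ψ i)) : Tendsto f l (𝓝 c) := by
  refine tendsto_order.2 ⟨fun a ha => ?_, fun b hb => ?_⟩
  · obtain ⟨i, hi, hfi⟩ := ((hφ.eventually (lt_mem_nhds ha)).and h).exists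
    exact hfi.mono fun x hx => hi.trans_le hx.1
  · obtain ⟨i, hi, hfi⟩ := ((hψ.eventually (gt_mem_nhds hb)).and h).exists
    exact hfi.mono fun x hx => hx.2.trans_lt hi

def IsSlowlyVarying (ℓ : ℝ → ℝ) : Prop :=
  ∀ l > (0:ℝ), Tendsto (fun x => ℓ (l * x) / ℓ x) atTop (𝓝 1)

namespace IsSlowlyVarying

variable {ℓ : ℝ → ℝ}

theorem tendsto_log_exp_add_sub (hℓ : IsSlowlyVarying ℓ) (hpos : ∀ᶠ x in atTop, 0 < ℓ x) (u : ℝ) :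
    Tendsto (fun x => log (ℓ (exp (x + u))) - log (ℓ (exp x))) atTop (𝓝 0) := by
  have hratio := (hℓ _ (exp_pos u)).comp tendsto_exp_atTop
  have hlog := ((continuousAt_log one_ne_zero).tendsto.comp hratio)
  rw [log_one] at hlog
  refine hlog.congr' ?_
  have hpos' := tendsto_exp_atTop.eventually hpos
  filter_upwards [hpos', (tendsto_atTop_add_const_right _ u tendsto_id).eventually hpos']
    with x hx hxu
  simp only [Function.comp_apply, ← exp_add, add_comm u x]
  exact log_div hxu.ne' hx.ne'

theorem eventually_abs_log_sub_le (hℓ : IsSlowlyVarying ℓ) (hpos : ∀ᶠ x in atTop, 0 < ℓ x)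
    (hmeas : Measurable ℓ) {ε : ℝ} (hε : 0 < ε) :
    ∀ᶠ x in atTop, ∀ y, x ≤ y → |log (ℓ y) - log (ℓ x)| ≤ ε * (log y - log x + 1) := by
  set h : ℝ → ℝ := fun s => log (ℓ (exp s))
  have hunif := Metric.tendstoUniformlyOn_iff.1
    (tendstoUniformlyOn_add_sub_of_measurable (measurable_log.comp (hmeas.comp measurable_exp))
      (hℓ.tendsto_log_exp_add_sub hpos)) ε hε
  obtain ⟨X, hX⟩ := eventually_atTop.1 hunif
  have hsteps := abs_sub_le_mul_add_one_of_forall_Icc (h := h) fun x hx t ht => by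
    simpa [Real.dist_eq, abs_sub_comm] using (hX x hx t ht).le
  filter_upwards [eventually_ge_atTop (exp X)] with x hx y hxy
  have hx0 : 0 < x := (exp_pos X).trans_le hx
  have hlog : X ≤ log x := by rwa [le_log_iff_exp_le hx0]
  have := hsteps (log x) hlog (log y - log x) (sub_nonneg.2 (log_le_log hx0 hxy))
  simpa only [h, add_sub_cancel, exp_log hx0, exp_log (hx0.trans_le hxy)] using this

theorem eventually_potter (hℓ : IsSlowlyVarying ℓ) (hpos : ∀ᶠ x in atTop, 0 < ℓ x)
    (hmeas : Measurable ℓ) {ε : ℝ} (hε : 0 < ε) :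
    ∀ᶠ u in atTop, ∀ x, u ≤ x →
      exp (-ε) * (u / x) ^ ε * ℓ x ≤ ℓ u ∧ ℓ u ≤ exp ε * (u / x) ^ (-ε) * ℓ x := by
  filter_upwards [hℓ.eventually_abs_log_sub_le hpos hmeas hε, eventually_gt_atTop 0,
    eventually_forall_ge_atTop.2 hpos] with u hu hu0 hposu x hux
  have hx0 : 0 < x := hu0.trans_le hux
  have hb := abs_le.1 (hu x hux)
  have hpow : ∀ r, (u / x) ^ r = exp (r * (log u - log x)) := fun r => by
    rw [rpow_def_of_pos (div_pos hu0 hx0), log_div hu0.ne' hx0.ne', mul_comm]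
  have hℓu := exp_log (hposu u le_rfl)
  have hℓx := exp_log (hposu x hux)
  constructor
  · calc exp (-ε) * (u / x) ^ ε * ℓ x = exp (-ε + ε * (log u - log x) + log (ℓ x)) := by
          rw [hpow, exp_add, exp_add, hℓx]
      _ ≤ exp (log (ℓ u)) := exp_le_exp.2 (by linarith)
      _ = ℓ u := hℓu
  · calc ℓ u = exp (log (ℓ u)) := hℓu.symm
      _ ≤ exp (ε + -ε * (log u - log x) + log (ℓ x)) := exp_le_exp.2 (by linarith)
      _ = exp ε * (u / x) ^ (-ε) * ℓ x := by rw [hpow, exp_add, exp_add, hℓx]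

theorem tendsto_rpow_mul_atTop (hℓ : IsSlowlyVarying ℓ) (hpos : ∀ᶠ x in atTop, 0 < ℓ x)
    (hmeas : Measurable ℓ) {r : ℝ} (hr : 0 < r) :
    Tendsto (fun x => x ^ r * ℓ x) atTop atTop := by
  set ε := r / 2
  obtain ⟨X, hX, hX0, hℓX⟩ := ((hℓ.eventually_potter hpos hmeas (half_pos hr)).and
    ((eventually_gt_atTop 0).and hpos)).exists
  have hc : 0 < exp (-ε) * X ^ ε * ℓ X := by positivity
  refine tendsto_atTop_mono' atTop ?_ ((tendsto_rpow_atTop (half_pos hr)).const_mul_atTop hc)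
  filter_upwards [eventually_ge_atTop X] with x hx
  have hx0 : 0 < x := hX0.trans_le hx
  have hbound : exp (-ε) * (X / x) ^ ε * ℓ X ≤ ℓ x := by
    have hpow : 0 < (X / x) ^ ε := by positivity
    calc exp (-ε) * (X / x) ^ ε * ℓ X
        ≤ exp (-ε) * (X / x) ^ ε * (exp ε * (X / x) ^ (-ε) * ℓ x) :=
          mul_le_mul_of_nonneg_left (hX x hx).2 (by positivity)
      _ = ℓ x := by rw [exp_neg, rpow_neg (div_pos hX0 hx0).le]; field_simp
  calc exp (-ε) * X ^ ε * ℓ X * x ^ ε = x ^ r * (exp (-ε) * (X / x) ^ ε * ℓ X) := by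
        rw [div_rpow hX0.le hx0.le, show r = ε + ε by ring, rpow_add hx0]
        field_simp
    _ ≤ x ^ r * ℓ x := mul_le_mul_of_nonneg_left hbound (by positivity)

theorem eventually_div_integral_rpow_mul_mem_Icc (hℓ : IsSlowlyVarying ℓ)
    (hpos : ∀ᶠ x in atTop, 0 < ℓ x) (hmeas : Measurable ℓ) {A lam ε : ℝ} (hε : 0 < ε)
    (hεlam : ε < lam + 1)
    (hint : ∀ b, A ≤ b → IntervalIntegrable (fun u => u ^ lam * ℓ u) volume A b) :
    ∀ᶠ x in atTop, (∫ u in A..x, u ^ lam * ℓ u) / (x ^ (lam + 1) * ℓ x) ∈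
      Icc (exp (-ε) * (1 - ε) / (lam + ε + 1) - ε) (exp ε / (lam + 1 - ε) + ε) := by
  obtain ⟨X, ⟨⟨hpotter, hX0⟩, hXA⟩, hposX⟩ :=
    ((((eventually_forall_ge_atTop.2 (hℓ.eventually_potter hpos hmeas hε)).and
      (eventually_gt_atTop 0)).and (eventually_ge_atTop A)).and
      (eventually_forall_ge_atTop.2 hpos)).exists
  have hexp : 0 < lam + ε + 1 := by linarith
  have hhead : Tendsto (fun x => (∫ u in A..X, u ^ lam * ℓ u) / (x ^ (lam + 1) * ℓ x)) atTop
      (𝓝 0) := tendsto_const_nhds.div_atTop (hℓ.tendsto_rpow_mul_atTop hpos hmeas (by linarith))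
  have hratio : Tendsto (fun x => (X / x) ^ (lam + ε + 1)) atTop (𝓝 0) := by
    have := ((continuousAt_rpow_const 0 _ (Or.inr hexp.le)).tendsto).comp
      ((tendsto_const_nhds (x := X)).div_atTop tendsto_id)
    rwa [zero_rpow hexp.ne'] at this
  filter_upwards [eventually_ge_atTop X, hhead.eventually (Icc_mem_nhds (neg_lt_zero.2 hε) hε),
    hratio.eventually (ge_mem_nhds hε)] with x hx hhead_x hratio_x
  have hint' : IntervalIntegrable (fun u => u ^ lam * ℓ u) volume X x :=
    (hint x (hXA.trans hx)).mono_set (uIcc_subset_uIcc (mem_uIcc_of_le hXA hx) right_mem_uIcc)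
  have htail := div_integral_rpow_mul_mem_Icc hX0 hx (hposX x hx) hεlam (by linarith) hint'
    fun u hu => hpotter u hu.1 x hu.2
  rw [← integral_add_adjacent_intervals (hint X hXA) hint', add_div]
  have hratio_le : exp (-ε) * (1 - ε) / (lam + ε + 1) ≤
      exp (-ε) * (1 - (X / x) ^ (lam + ε + 1)) / (lam + ε + 1) := by
    gcongr
  exact ⟨by linarith [hhead_x.1, htail.1], by linarith [hhead_x.2, htail.2]⟩

theorem tendsto_integral_rpow_mul_div (hℓ : IsSlowlyVarying ℓ) (hpos : ∀ᶠ x in atTop, 0 < ℓ x)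
    (hmeas : Measurable ℓ) {A lam : ℝ} (hlam : -1 < lam)
    (hint : ∀ b, A ≤ b → IntervalIntegrable (fun u => u ^ lam * ℓ u) volume A b) :
    Tendsto (fun x => (∫ u in A..x, u ^ lam * ℓ u) / (x ^ (lam + 1) * ℓ x)) atTop
      (𝓝 (1 / (lam + 1))) := by
  have hlam' : 0 < lam + 1 := by linarith
  have hlim : ∀ {φ : ℝ → ℝ}, ContinuousAt φ 0 → φ 0 = 1 / (lam + 1) →
      Tendsto φ (𝓝[>] 0) (𝓝 (1 / (lam + 1))) := fun hφ h0 =>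
    h0 ▸ hφ.tendsto.mono_left nhdsWithin_le_nhds
  refine tendsto_of_forall_eventually_mem_Icc
    (φ := fun ε => exp (-ε) * (1 - ε) / (lam + ε + 1) - ε)
    (ψ := fun ε => exp ε / (lam + 1 - ε) + ε)
    (hlim (by fun_prop (disch := simp; linarith)) (by simp))
    (hlim (by fun_prop (disch := simp; linarith)) (by simp)) ?_
  filter_upwards [Ioo_mem_nhdsGT hlam'] with ε hε
  exact hℓ.eventually_div_integral_rpow_mul_mem_Icc hpos hmeas hε.1 hε.2 hint

end IsSlowlyVarying

/-- Karamata's integral theorem (direct half): if `ℓ` is slowly varying at infinity,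
positive, measurable and locally bounded on `[A,∞)`, then for every `λ > −1`,
`∫_A^x u^λ ℓ(u) du ∼ x^{λ+1} ℓ(x)/(λ+1)` as `x → ∞`. -/
theorem stmt3 (ℓ : ℝ → ℝ) (A : ℝ) (hA : 0 < A)
    (hpos : ∀ x, A ≤ x → 0 < ℓ x)
    (hmeas : Measurable ℓ)
    (hloc : ∀ B, A ≤ B → ∃ C, ∀ x ∈ Icc A B, |ℓ x| ≤ C)
    (hSV : ∀ l > (0:ℝ), Tendsto (fun x => ℓ (l * x) / ℓ x) atTop (nhds 1))
    (lam : ℝ) (hlam : -1 < lam) :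
    Tendsto (fun x => (∫ u in A..x, u ^ lam * ℓ u) / (x ^ (lam + 1) * ℓ x / (lam + 1)))
      atTop (nhds 1) := by
  have hint : ∀ b, A ≤ b → IntervalIntegrable (fun u => u ^ lam * ℓ u) volume A b := by
    intro b hb
    obtain ⟨C, hC⟩ := hloc b hb
    refine (intervalIntegrable_of_abs_le hmeas hb hC).continuousOn_mul ?_
    exact continuousOn_id.rpow_const fun u hu => Or.inl (hA.trans_le (uIcc_of_le hb ▸ hu).1).ne'
  have hlim := (IsSlowlyVarying.tendsto_integral_rpow_mul_div hSV
    (eventually_atTop.2 ⟨A, hpos⟩) hmeas hlam hint).const_mul (lam + 1)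
  rw [mul_one_div_cancel (by linarith)] at hlim
  refine hlim.congr fun x => ?_
  rw [div_div_eq_mul_div]
  ring
end

section
/- Under the critical assumption f(s) = (1-s)^{1+ν} L(1/(1-s)), the ratio R(t;s)/R(t;0) → 1 as t → ∞ for every fixed s ∈ [0,1), where R(t;s) = 1 − F(t;s) and F(t;s) is defined by ∫_s^{F(t;s)} dx/f(x) = t. -/
/-!
Write `G x = ∫_0^x 1/f`. Then `G (F(t;0)) = t` and `G (F(t;s)) = G s + t`, so the integral of
`1/f` between `F(t;0)` and `F(t;s)` is the constant `G s ≥ 0`; in particular `F(t;0) ≤ F(t;s)`.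
For the contraction `φ x = 1 - μ (1 - x)` towards `1`, `μ < 1`, slow variation of `L` gives
`f (φ x) / f x → μ^(1+ν)`, and `μ^(1+ν) < μ` because `ν > 0`. Substituting `φ` then shows that
`∫_a^{φ a} 1/f` grows linearly in `G a`, so once `G (F(t;0)) = t` is large the constant integral
up to `F(t;s)` cannot reach `φ (F(t;0))`: `1 - F(t;s) ≥ μ (1 - F(t;0))`. Hence the ratio is
squeezed between `μ` and `1` for every `μ < 1`.
-/

open Filter Set intervalIntegral MeasureTheory Topology

lemma IntervalIntegrable.comp_mul_add {g : ℝ → ℝ} {μ d p q : ℝ} (hμ : μ ≠ 0)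
    (hg : IntervalIntegrable g volume (μ * p + d) (μ * q + d)) :
    IntervalIntegrable (fun x => g (μ * x + d)) volume p q := by
  simpa [hμ] using (hg.comp_add_right d).comp_mul_left (c := μ)

lemma mul_integral_le_mul_integral_of_le_comp_mul_add {g : ℝ → ℝ} {μ θ d p q : ℝ} (hμ : 0 < μ)
    (hpq : p ≤ q) (hg : IntervalIntegrable g volume p q)
    (hgφ : IntervalIntegrable g volume (μ * p + d) (μ * q + d))
    (hle : ∀ x ∈ Icc p q, g x ≤ θ * g (μ * x + d)) :
    μ * ∫ x in p..q, g x ≤ θ * ∫ x in μ * p + d..μ * q + d, g x := by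
  have hmono := integral_mono_on hpq hg ((hgφ.comp_mul_add hμ.ne').const_mul θ) hle
  rw [intervalIntegral.integral_const_mul, integral_comp_mul_add _ hμ.ne', smul_eq_mul] at hmono
  calc μ * ∫ x in p..q, g x ≤ μ * (θ * (μ⁻¹ * ∫ x in μ * p + d..μ * q + d, g x)) :=
        mul_le_mul_of_nonneg_left hmono hμ.le
    _ = θ * ∫ x in μ * p + d..μ * q + d, g x := by field_simp

lemma le_of_pos_of_integral_nonneg {g : ℝ → ℝ} {a b : ℝ} (hg : ∀ x ∈ Ioo b a, 0 < g x)
    (hi : IntervalIntegrable g volume a b) (h : 0 ≤ ∫ x in a..b, g x) : a ≤ b := by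
  by_contra! hba
  rw [integral_symm] at h
  linarith [intervalIntegral_pos_of_pos_on hi.symm hg hba]

lemma le_mul_add_one_sub_of_integral_lt {g : ℝ → ℝ} {μ θ x₁ a b : ℝ} (hμ : 0 < μ) (hμ1 : μ ≤ 1)
    (hθ : 0 ≤ θ) (hx₁ : 0 ≤ x₁) (hx₁a : x₁ ≤ a) (hg : ∀ x ∈ Icc 0 b, 0 ≤ g x)
    (hia : IntervalIntegrable g volume 0 a) (hib : IntervalIntegrable g volume 0 b)
    (hcomp : ∀ x ∈ Icc x₁ a, g x ≤ θ * g (μ * x + (1 - μ)))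
    (hbig : μ * (∫ x in 0..x₁, g x) + θ * ∫ x in a..b, g x < (μ - θ) * ∫ x in 0..a, g x) :
    b ≤ μ * a + (1 - μ) := by
  by_contra! hb
  set p := μ * x₁ + (1 - μ)
  set q := μ * a + (1 - μ)
  have hp : 0 ≤ p := add_nonneg (mul_nonneg hμ.le hx₁) (sub_nonneg.2 hμ1)
  have hpq : p ≤ q := add_le_add_left (mul_le_mul_of_nonneg_left hx₁a hμ.le) _
  have hi : ∀ {u}, u ∈ Icc 0 b → IntervalIntegrable g volume 0 u := fun hu =>
    hib.mono_set (uIcc_subset_uIcc_left (Icc_subset_uIcc hu))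
  have hix₁ : IntervalIntegrable g volume 0 x₁ :=
    hia.mono_set (uIcc_subset_uIcc_left (Icc_subset_uIcc ⟨hx₁, hx₁a⟩))
  have hip := hi ⟨hp, by linarith⟩
  have hiq := hi ⟨hp.trans hpq, hb.le⟩
  have hcmp := mul_integral_le_mul_integral_of_le_comp_mul_add hμ hx₁a (hix₁.symm.trans hia)
    (hip.symm.trans hiq) hcomp
  rw [← integral_interval_sub_left hia hix₁, ← integral_interval_sub_left hiq hip] at hcmp
  have hGp : 0 ≤ ∫ x in 0..p, g x :=
    integral_nonneg hp fun x hx => hg x ⟨hx.1, by linarith [hx.2]⟩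
  have hGq : ∫ x in 0..q, g x ≤ ∫ x in 0..b, g x := by
    rw [← integral_add_adjacent_intervals hiq (hiq.symm.trans hib)]
    have : 0 ≤ ∫ x in q..b, g x :=
      integral_nonneg hb.le fun x hx => hg x ⟨by linarith [hx.1], hx.2⟩
    linarith
  rw [← integral_interval_sub_left hib hia] at hbig
  have hθq : θ * ((∫ x in 0..q, g x) - ∫ x in 0..p, g x) ≤ θ * ∫ x in 0..b, g x :=
    mul_le_mul_of_nonneg_left (by linarith) hθ
  linarith

lemma tendsto_one_sub_div_one_sub {α : Type*} {l : Filter α} {a b : α → ℝ}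
    (ha : ∀ᶠ t in l, a t < 1) (hab : ∀ᶠ t in l, a t ≤ b t)
    (hb : ∀ μ ∈ Ioo (0 : ℝ) 1, ∀ᶠ t in l, b t ≤ μ * a t + (1 - μ)) :
    Tendsto (fun t => (1 - b t) / (1 - a t)) l (𝓝 1) := by
  refine tendsto_order.2 ⟨fun r hr => ?_, fun r hr => ?_⟩
  · obtain ⟨μ, hrμ, hμ1⟩ := exists_between (max_lt hr one_pos)
    rw [max_lt_iff] at hrμ
    filter_upwards [ha, hb μ ⟨hrμ.2, hμ1⟩] with t hat hbt
    rw [lt_div_iff₀ (sub_pos.2 hat)]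
    nlinarith
  · filter_upwards [ha, hab] with t hat habt
    exact (div_le_one_of_le₀ (by linarith) (by linarith)).trans_lt hr

lemma tendsto_one_sub_div_one_sub_of_integral_eq {α : Type*} {l : Filter α} {g : ℝ → ℝ}
    {a b : α → ℝ} {c : ℝ} (hg : ∀ x ∈ Ico 0 1, 0 < g x)
    (hcomp : ∀ μ ∈ Ioo (0 : ℝ) 1, ∃ θ, 0 ≤ θ ∧ θ < μ ∧
      ∀ᶠ x in 𝓝[<] 1, g x ≤ θ * g (μ * x + (1 - μ)))
    (ha : Tendsto a l (𝓝[<] 1)) (hGa : Tendsto (fun t => ∫ x in 0..a t, g x) l atTop)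
    (hb : ∀ᶠ t in l, b t ∈ Ico 0 1) (hia : ∀ᶠ t in l, IntervalIntegrable g volume 0 (a t))
    (hib : ∀ᶠ t in l, IntervalIntegrable g volume 0 (b t))
    (hc : ∀ᶠ t in l, ∫ x in a t..b t, g x = c) (hc0 : 0 ≤ c) :
    Tendsto (fun t => (1 - b t) / (1 - a t)) l (𝓝 1) := by
  obtain ⟨hlim, hlt⟩ := tendsto_nhdsWithin_iff.1 ha
  refine tendsto_one_sub_div_one_sub hlt ?_ fun μ hμ => ?_
  · filter_upwards [hlt, hb, hia, hib, hc] with t hat hbt hiat hibt hct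
    exact le_of_pos_of_integral_nonneg (fun x hx => hg x ⟨hbt.1.trans hx.1.le, hx.2.trans hat⟩)
      (hiat.symm.trans hibt) (hct ▸ hc0)
  · obtain ⟨θ, hθ, hθμ, hcomp⟩ := hcomp μ hμ
    obtain ⟨x₀, hx₀, hx₀'⟩ := (nhdsLT_basis_Ico (1 : ℝ)).eventually_iff.1 hcomp
    set x₁ := max x₀ 0
    have hbig : ∀ᶠ t in l, μ * (∫ x in 0..x₁, g x) + θ * c < (μ - θ) * ∫ x in 0..a t, g x :=
      (hGa.const_mul_atTop (sub_pos.2 hθμ)).eventually_gt_atTop _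
    filter_upwards [hlim.eventually (eventually_ge_nhds (max_lt hx₀ one_pos)), hbig, hlt, hb,
      hia, hib, hc] with t hx₁a hbigt hat hbt hiat hibt hct
    refine le_mul_add_one_sub_of_integral_lt hμ.1 hμ.2.le hθ (le_max_right _ _) hx₁a
      (fun x hx => (hg x ⟨hx.1, hx.2.trans_lt hbt.2⟩).le) hiat hibt
      (fun x hx => hx₀' ⟨(le_max_left _ _).trans hx.1, hx.2.trans_lt hat⟩) (hct ▸ hbigt)

lemma tendsto_one_div_one_sub_nhdsLT_one : Tendsto (fun x : ℝ => 1 / (1 - x)) (𝓝[<] 1) atTop := by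
  have h : Tendsto (fun x : ℝ => 1 - x) (𝓝[<] 1) (𝓝[>] 0) := by
    refine tendsto_nhdsWithin_of_tendsto_nhds_of_eventually_within _ ?_ ?_
    · exact ((continuous_const.sub continuous_id).tendsto' 1 0 (sub_self 1)).mono_left
        nhdsWithin_le_nhds
    · filter_upwards [self_mem_nhdsWithin] with x (hx : x < 1)
      exact sub_pos.2 hx
  exact h.inv_tendsto_nhdsGT_zero.congr fun x => (one_div _).symm

lemma tendsto_div_comp_mul_add_nhdsLT_one {L f : ℝ → ℝ} {ν μ : ℝ} (hμ : 0 < μ)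
    (hLpos : ∀ x, 1 ≤ x → 0 < L x)
    (hSV : ∀ l > (0:ℝ), Tendsto (fun x => L (l * x) / L x) atTop (𝓝 1))
    (hf : ∀ x : ℝ, 0 ≤ x → x < 1 → f x = (1 - x) ^ (1 + ν) * L (1 / (1 - x))) :
    Tendsto (fun x => f (μ * x + (1 - μ)) / f x) (𝓝[<] 1) (𝓝 (μ ^ (1 + ν))) := by
  have hlim := ((hSV μ⁻¹ (inv_pos.2 hμ)).comp tendsto_one_div_one_sub_nhdsLT_one).const_mul
    (μ ^ (1 + ν))
  rw [mul_one] at hlim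
  refine hlim.congr' ?_
  have hlt : max 0 (1 - μ⁻¹) < 1 := max_lt one_pos (by linarith [inv_pos.2 hμ])
  filter_upwards [Ioo_mem_nhdsLT hlt] with x ⟨hx0, hx1⟩
  rw [max_lt_iff] at hx0
  have h1x : 0 < 1 - x := by linarith
  have hφ : 1 - (μ * x + (1 - μ)) = μ * (1 - x) := by ring
  have hu : (1 : ℝ) ≤ 1 / (1 - x) := by rw [le_div_iff₀ h1x]; linarith
  simp only [Function.comp_apply]
  rw [hf x hx0.1.le hx1, hf _ (by nlinarith [mul_inv_cancel₀ hμ.ne']) (by nlinarith), hφ,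
    Real.mul_rpow hμ.le h1x.le, show μ⁻¹ * (1 / (1 - x)) = 1 / (μ * (1 - x)) by field_simp]
  have := hLpos _ hu
  field_simp

lemma pos_of_eq_rpow_mul {L f : ℝ → ℝ} {ν : ℝ} (hLpos : ∀ x, 1 ≤ x → 0 < L x)
    (hf : ∀ x : ℝ, 0 ≤ x → x < 1 → f x = (1 - x) ^ (1 + ν) * L (1 / (1 - x))) :
    ∀ x ∈ Ico (0 : ℝ) 1, 0 < f x := by
  rintro x ⟨hx0, hx1⟩
  have h1x : 0 < 1 - x := by linarith
  rw [hf x hx0 hx1]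
  exact mul_pos (Real.rpow_pos_of_pos h1x _) (hLpos _ (by rw [le_div_iff₀ h1x]; linarith))

lemma exists_one_div_le_mul_one_div_comp_mul_add {L f : ℝ → ℝ} {ν μ : ℝ} (hν : 0 < ν)
    (hμ : μ ∈ Ioo (0 : ℝ) 1) (hLpos : ∀ x, 1 ≤ x → 0 < L x)
    (hSV : ∀ l > (0:ℝ), Tendsto (fun x => L (l * x) / L x) atTop (𝓝 1))
    (hf : ∀ x : ℝ, 0 ≤ x → x < 1 → f x = (1 - x) ^ (1 + ν) * L (1 / (1 - x))) :
    ∃ θ, 0 ≤ θ ∧ θ < μ ∧ ∀ᶠ x in 𝓝[<] 1, 1 / f x ≤ θ * (1 / f (μ * x + (1 - μ))) := by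
  have hμν : μ ^ (1 + ν) < μ := by
    simpa using Real.rpow_lt_rpow_of_exponent_gt hμ.1 hμ.2 (by linarith : (1 : ℝ) < 1 + ν)
  obtain ⟨θ, hθ, hθμ⟩ := exists_between hμν
  refine ⟨θ, (Real.rpow_pos_of_pos hμ.1 _).le.trans hθ.le, hθμ, ?_⟩
  have hpos := pos_of_eq_rpow_mul hLpos hf
  filter_upwards [(tendsto_div_comp_mul_add_nhdsLT_one hμ.1 hLpos hSV hf).eventually
    (eventually_lt_nhds hθ), Ioo_mem_nhdsLT zero_lt_one] with x hx ⟨hx0, hx1⟩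
  have hfx := hpos x ⟨hx0.le, hx1⟩
  have hfφ := hpos (μ * x + (1 - μ)) ⟨by nlinarith [hμ.2], by nlinarith [hμ.1]⟩
  rw [div_lt_iff₀ hfx] at hx
  rw [mul_one_div, div_le_div_iff₀ hfx hfφ]
  linarith

lemma integral_eq_integral_of_integral_eq {g : ℝ → ℝ} {s a b t : ℝ} (hs : s ∈ Icc 0 a)
    (ht : t ≠ 0) (ha : ∫ x in 0..a, g x = t) (hb : ∫ x in s..b, g x = t) :
    IntervalIntegrable g volume 0 a ∧ IntervalIntegrable g volume 0 b ∧
      ∫ x in a..b, g x = ∫ x in 0..s, g x := by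
  have hia := intervalIntegrable_of_integral_ne_zero (ha ▸ ht)
  have his := hia.mono_set (uIcc_subset_uIcc_left (Icc_subset_uIcc hs))
  have hib := his.trans (intervalIntegrable_of_integral_ne_zero (hb ▸ ht))
  refine ⟨hia, hib, ?_⟩
  rw [← integral_interval_sub_left hib hia, ← integral_add_adjacent_intervals his
    (his.symm.trans hib), ha, hb]
  ring

theorem stmt5_general (L f : ℝ → ℝ) (F : ℝ → ℝ → ℝ) (ν : ℝ)
    (hν : 0 < ν)
    (hLpos : ∀ x, 1 ≤ x → 0 < L x)
    (hSV : ∀ l > (0:ℝ), Tendsto (fun x => L (l * x) / L x) atTop (nhds 1))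
    (hf : ∀ x : ℝ, 0 ≤ x → x < 1 → f x = (1 - x) ^ (1 + ν) * L (1 / (1 - x)))
    (hFint : ∀ s : ℝ, 0 ≤ s → s < 1 → ∀ t : ℝ, 0 ≤ t → (∫ x in s..F t s, 1 / f x) = t)
    (hrange : ∀ s : ℝ, 0 ≤ s → s < 1 → ∀ t : ℝ, 0 ≤ t → s ≤ F t s ∧ F t s < 1)
    (hlim : ∀ s : ℝ, 0 ≤ s → s < 1 → Tendsto (fun t => F t s) atTop (nhds 1)) :
    ∀ s : ℝ, 0 ≤ s → s < 1 →
      Tendsto (fun t => (1 - F t s) / (1 - F t 0)) atTop (nhds 1) := by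
  intro s hs0 hs1
  have hg : ∀ x ∈ Ico (0 : ℝ) 1, 0 < 1 / f x := fun x hx =>
    one_div_pos.2 (pos_of_eq_rpow_mul hLpos hf x hx)
  have hF0 := hlim 0 le_rfl one_pos
  have hev := (eventually_ge_atTop 1).and (hF0.eventually (eventually_ge_nhds hs1))
  have hsol := fun t (ht : 1 ≤ t ∧ s ≤ F t 0) =>
    integral_eq_integral_of_integral_eq ⟨hs0, ht.2⟩ (by linarith)
      (hFint 0 le_rfl one_pos t (by linarith)) (hFint s hs0 hs1 t (by linarith))
  refine tendsto_one_sub_div_one_sub_of_integral_eq hg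
    (fun μ hμ => exists_one_div_le_mul_one_div_comp_mul_add hν hμ hLpos hSV hf)
    (tendsto_nhdsWithin_iff.2 ⟨hF0, ?_⟩) ?_ ?_ (hev.mono fun t ht => (hsol t ht).1)
    (hev.mono fun t ht => (hsol t ht).2.1) (hev.mono fun t ht => (hsol t ht).2.2)
    (integral_nonneg hs0 fun x hx => (hg x ⟨hx.1, hx.2.trans_lt hs1⟩).le)
  · filter_upwards [eventually_ge_atTop 0] with t ht
    exact (hrange 0 le_rfl one_pos t ht).2
  · refine tendsto_id.congr' ?_
    filter_upwards [eventually_ge_atTop 0] with t ht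
    exact (hFint 0 le_rfl one_pos t ht).symm
  · filter_upwards [eventually_ge_atTop 0] with t ht
    exact ⟨hs0.trans (hrange s hs0 hs1 t ht).1, (hrange s hs0 hs1 t ht).2⟩

/-- Under `f(s) = (1-s)^{1+ν} L(1/(1-s))`, the ratio `R(t;s)/R(t;0) → 1` as `t → ∞` for
every fixed `s ∈ [0,1)`, where `R(t;s) = 1 − F(t;s)` and `F` is defined by
`∫_s^{F(t;s)} dx/f(x) = t`, increasing to `1`. -/
theorem stmt5 (L f : ℝ → ℝ) (F : ℝ → ℝ → ℝ) (ν : ℝ)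
    (hν : 0 < ν) (hν1 : ν ≤ 1)
    (hLpos : ∀ x, 1 ≤ x → 0 < L x)
    (hSV : ∀ l > (0:ℝ), Tendsto (fun x => L (l * x) / L x) atTop (nhds 1))
    (hloc : ∀ B, 1 ≤ B → ∃ C, ∀ x ∈ Icc (1:ℝ) B, |L x| ≤ C)
    (hf : ∀ x : ℝ, 0 ≤ x → x < 1 → f x = (1 - x) ^ (1 + ν) * L (1 / (1 - x)))
    (hFint : ∀ s : ℝ, 0 ≤ s → s < 1 → ∀ t : ℝ, 0 ≤ t → (∫ x in s..F t s, 1 / f x) = t)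
    (hrange : ∀ s : ℝ, 0 ≤ s → s < 1 → ∀ t : ℝ, 0 ≤ t → s ≤ F t s ∧ F t s < 1)
    (hmono : ∀ s : ℝ, 0 ≤ s → s < 1 → MonotoneOn (fun t => F t s) (Ici 0))
    (hlim : ∀ s : ℝ, 0 ≤ s → s < 1 → Tendsto (fun t => F t s) atTop (nhds 1)) :
    ∀ s : ℝ, 0 ≤ s → s < 1 →
      Tendsto (fun t => (1 - F t s) / (1 - F t 0)) atTop (nhds 1) :=
  stmt5_general L f F ν hν hLpos hSV hf hFint hrange hlim
end

section
/- Suppose G(t;s) = s·exp(∫_0^t h(F̂(τ;s)) dτ) where F̂(t;s) solves ∂F̂/∂t = f̂(F̂), F̂(0;s) = s, with F̂(t;s) ↑ 1 as t → ∞, h continuous with h(1) = 0, and f̂ > 0 on [0,1). Suppose moreover that h ≤ 0 on [0,1) and that the integral below converges. Then for each 0 ≤ s < 1, the normalized function U(t;s) := s·exp(∫_0^t [h(F̂(u;s)) − h(F̂(u;0))] du) converges as t → ∞ to U(s) = s·exp(∫_0^s (h(F̂(∞;x)) − h(x))/f̂(x) dx) = s·exp(∫_0^s (−h(x))/f̂(x)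 dx) = s·exp(∫_0^s |h(x)|/f̂(x) dx). -/
open Filter Set intervalIntegral MeasureTheory
open Topology

/-- Let `F̂(t;s)` be the flow of `x' = f̂(x)` increasing to `1`, with `h` continuous,
`h(1) = 0`, `h ≤ 0` on `[0,1)` and `f̂ > 0` on `[0,1)`. Then the normalized function
`U(t;s) = s·exp(∫_0^t [h(F̂(u;s)) − h(F̂(u;0))] du)` converges, as `t → ∞`, to
`U(s) = s·exp(∫_0^s |h(x)|/f̂(x) dx)`, provided the latter integral converges. -/
theorem stmt15 (f h : ℝ → ℝ) (Fh : ℝ → ℝ → ℝ) (s : ℝ)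
    (hs : 0 ≤ s) (hs1 : s < 1)
    (hfpos : ∀ x : ℝ, 0 ≤ x → x < 1 → 0 < f x)
    (hfcont : ContinuousOn f (Ico 0 1))
    (hhcont : ContinuousOn h (Icc 0 1))
    (hh1 : h 1 = 0) (hhneg : ∀ x : ℝ, 0 ≤ x → x < 1 → h x ≤ 0)
    (hflow0 : ∀ x : ℝ, Fh 0 x = x)
    (hode : ∀ x : ℝ, 0 ≤ x → x < 1 → ∀ t : ℝ, 0 ≤ t →
      HasDerivAt (fun t => Fh t x) (f (Fh t x)) t)
    (hrange : ∀ x : ℝ, 0 ≤ x → x < 1 → ∀ t : ℝ, 0 ≤ t → Fh t x ∈ Ico (0:ℝ) 1)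
    (hlim : ∀ x : ℝ, 0 ≤ x → x < 1 → Tendsto (fun t => Fh t x) atTop (nhds 1))
    (hint : IntervalIntegrable (fun x => |h x| / f x) volume 0 s) :
    Tendsto (fun t => s * Real.exp (∫ u in (0:ℝ)..t, (h (Fh u s) - h (Fh u 0))))
      atTop (nhds (s * Real.exp (∫ x in (0:ℝ)..s, |h x| / f x))) := by
  -- setup
  set g : ℝ → ℝ := fun y => (f y)⁻¹ with hgdef
  have hfne : ∀ y ∈ Ico (0:ℝ) 1, f y ≠ 0 := fun y hy => (hfpos y hy.1 hy.2).ne'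
  have hgcont : ContinuousOn g (Ico 0 1) := hfcont.inv₀ hfne
  have hsub : ∀ y ∈ Ico (0:ℝ) 1, uIcc (0:ℝ) y ⊆ Ico 0 1 := by
    intro y hy
    rw [uIcc_of_le hy.1]
    exact fun z hz => ⟨hz.1, lt_of_le_of_lt hz.2 hy.2⟩
  have hgint : ∀ y ∈ Ico (0:ℝ) 1, IntervalIntegrable g volume 0 y :=
    fun y hy => (hgcont.mono (hsub y hy)).intervalIntegrable
  set Φ : ℝ → ℝ := fun x => ∫ y in (0:ℝ)..x, g y with hΦdef
  have haesm : AEStronglyMeasurable g (volume.restrict (Ioo (0:ℝ) 1)) :=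
    (hgcont.mono Ioo_subset_Ico_self).aestronglyMeasurable measurableSet_Ioo
  have hΦd : ∀ y ∈ Ico (0:ℝ) 1, HasDerivWithinAt Φ (g y) (Ico 0 1) y := by
    intro y hy
    rcases eq_or_lt_of_le hy.1 with h0 | h0
    · have hmeas : StronglyMeasurableAtFilter g (𝓝[Ioi (0:ℝ)] 0) :=
        ⟨Ioo 0 1, Ioo_mem_nhdsGT_of_mem ⟨le_refl 0, zero_lt_one⟩, haesm⟩
      have hcw : ContinuousWithinAt g (Ioi (0:ℝ)) 0 :=
        (hgcont 0 ⟨le_refl 0, zero_lt_one⟩).mono_of_mem_nhdsWithin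
          (mem_of_superset (Ioo_mem_nhdsGT_of_mem ⟨le_refl 0, zero_lt_one⟩)
            Ioo_subset_Ico_self)
      have := intervalIntegral.integral_hasDerivWithinAt_right
        (s := Ici (0:ℝ)) (t := Ioi (0:ℝ)) (hgint 0 ⟨le_refl 0, zero_lt_one⟩) hmeas hcw
      rw [← h0]
      exact this.mono (Ico_subset_Ici_self)
    · have hmeas : StronglyMeasurableAtFilter g (𝓝 y) :=
        ⟨Ioo 0 1, Ioo_mem_nhds h0 hy.2, haesm⟩
      have hca : ContinuousAt g y := hgcont.continuousAt (Ico_mem_nhds h0 hy.2)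
      exact (intervalIntegral.integral_hasDerivAt_right (hgint y hy) hmeas hca).hasDerivWithinAt
  have hΦcont : ContinuousOn Φ (Ico 0 1) := fun y hy => (hΦd y hy).continuousWithinAt
  -- key flow identity
  have key : ∀ x : ℝ, 0 ≤ x → x < 1 → ∀ t : ℝ, 0 ≤ t → Φ (Fh t x) = Φ x + t := by
    intro x hx0 hx1 t ht
    have Fcont : ContinuousOn (fun u => Fh u x) (Icc 0 t) := fun u hu =>
      ((hode x hx0 hx1 u hu.1).continuousAt).continuousWithinAt
    have main := eq_of_has_deriv_right_eq (f' := fun _ => (1:ℝ))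
      (f := fun u => Φ (Fh u x)) (g := fun u => Φ x + u) (a := 0) (b := t)
      ?_ ?_ ?_ ?_ ?_
    · have := main t ⟨ht, le_refl t⟩
      simpa using this
    · intro u hu
      have hFu := hrange x hx0 hx1 u hu.1
      have hcomp := (hΦd _ hFu).comp u ((hode x hx0 hx1 u hu.1).hasDerivWithinAt)
        (fun v hv => hrange x hx0 hx1 v (le_trans hu.1 hv))
      have heq : g (Fh u x) * f (Fh u x) = 1 := inv_mul_cancel₀ (hfne _ hFu)
      rw [heq] at hcomp
      exact hcomp
    · intro u hu
      simpa using ((hasDerivAt_id u).const_add (Φ x)).hasDerivWithinAt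
    · exact hΦcont.comp Fcont (fun u hu => hrange x hx0 hx1 u hu.1)
    · exact (continuous_const.add continuous_id).continuousOn
    · simp [hflow0]
  have hΦ0 : Φ 0 = 0 := intervalIntegral.integral_same
  -- strict monotonicity of Φ on [0,1)
  have hmono : StrictMonoOn Φ (Ico (0:ℝ) 1) := by
    intro a ha b hb hab
    have hsub' : uIcc a b ⊆ Ico (0:ℝ) 1 := by
      rw [uIcc_of_le hab.le]
      exact fun z hz => ⟨le_trans ha.1 hz.1, lt_of_le_of_lt hz.2 hb.2⟩
    have hdiff : Φ b - Φ a = ∫ y in a..b, g y :=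
      intervalIntegral.integral_interval_sub_left (hgint b hb) (hgint a ha)
    have hpos : 0 < ∫ y in a..b, g y := by
      apply intervalIntegral.intervalIntegral_pos_of_pos_on
        ((hgcont.mono hsub').intervalIntegrable)
      · intro x hx
        have hx' : x ∈ Ico (0:ℝ) 1 := ⟨le_trans ha.1 hx.1.le, lt_trans hx.2 hb.2⟩
        exact inv_pos.mpr (hfpos x hx'.1 hx'.2)
      · exact hab
    linarith
  set T : ℝ := Φ s with hTdef
  have hT0 : 0 ≤ T := by
    apply intervalIntegral.integral_nonneg hs
    intro y hy
    exact inv_nonneg.mpr (hfpos y hy.1 (lt_of_le_of_lt hy.2 hs1)).le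
  have hsmem : s ∈ Ico (0:ℝ) 1 := ⟨hs, hs1⟩
  have h0mem : (0:ℝ) ∈ Ico (0:ℝ) 1 := ⟨le_refl 0, zero_lt_one⟩
  have hFT : Fh T 0 = s := by
    apply hmono.injOn (hrange 0 le_rfl zero_lt_one T hT0) hsmem
    rw [key 0 le_rfl zero_lt_one T hT0, hΦ0, zero_add]
  have hFs : ∀ u : ℝ, 0 ≤ u → Fh u s = Fh (u + T) 0 := by
    intro u hu
    apply hmono.injOn (hrange s hs hs1 u hu)
      (hrange 0 le_rfl zero_lt_one (u + T) (by linarith))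
    rw [key s hs hs1 u hu, key 0 le_rfl zero_lt_one (u + T) (by linarith), hΦ0]
    ring
  -- the shifted integrand
  set H : ℝ → ℝ := fun v => h (Fh v 0) with hHdef
  have hF0cont : ∀ t : ℝ, 0 ≤ t → ContinuousOn (fun u => Fh u 0) (Icc 0 t) := fun t ht u hu =>
    ((hode 0 le_rfl zero_lt_one u hu.1).continuousAt).continuousWithinAt
  have hHcont : ContinuousOn H (Ici 0) := by
    apply hhcont.comp (fun u hu => ((hode 0 le_rfl zero_lt_one u hu).continuousAt).continuousWithinAt)
    intro u hu
    exact Ico_subset_Icc_self (hrange 0 le_rfl zero_lt_one u hu)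
  have hHint : ∀ a b : ℝ, 0 ≤ a → 0 ≤ b → IntervalIntegrable H volume a b := by
    intro a b ha hb
    apply (hHcont.mono _).intervalIntegrable
    intro x hx
    exact le_trans (le_inf ha hb) hx.1
  -- rewrite the integral for t ≥ 0
  have hA : ∀ t : ℝ, 0 ≤ t →
      (∫ u in (0:ℝ)..t, (h (Fh u s) - h (Fh u 0))) =
      (∫ u in t..(t+T), H u) - ∫ u in (0:ℝ)..T, H u := by
    intro t ht
    have hint1 : IntervalIntegrable (fun u => H (u + T)) volume 0 t := by
      apply (ContinuousOn.intervalIntegrable _)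
      apply hHcont.comp ((continuous_id.add continuous_const).continuousOn)
      intro u hu
      rw [uIcc_of_le ht] at hu
      show (0:ℝ) ≤ u + T
      linarith [hu.1, hT0]
    have h1 : (∫ u in (0:ℝ)..t, (h (Fh u s) - h (Fh u 0))) =
        (∫ u in (0:ℝ)..t, H (u + T)) - ∫ u in (0:ℝ)..t, H u := by
      rw [← intervalIntegral.integral_sub hint1 (hHint 0 t le_rfl ht)]
      apply intervalIntegral.integral_congr
      intro u hu
      rw [uIcc_of_le ht] at hu
      simp only [hHdef]
      rw [hFs u hu.1]
    have h2 : (∫ u in (0:ℝ)..t, H (u + T)) = ∫ u in T..(t+T), H u := by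
      rw [intervalIntegral.integral_comp_add_right H T, zero_add]
    have h3 : (∫ u in T..(t+T), H u) =
        ((∫ u in T..(0:ℝ), H u) + ∫ u in (0:ℝ)..t, H u) + ∫ u in t..(t+T), H u := by
      rw [intervalIntegral.integral_add_adjacent_intervals (hHint T 0 hT0 le_rfl)
        (hHint 0 t le_rfl ht),
        intervalIntegral.integral_add_adjacent_intervals (hHint T t hT0 ht)
        (hHint t (t+T) ht (by linarith))]
    have h4 : (∫ u in T..(0:ℝ), H u) = - ∫ u in (0:ℝ)..T, H u :=
      intervalIntegral.integral_symm 0 T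
    rw [h1, h2, h3, h4]
    ring
  -- tail tends to zero
  have hH0 : Tendsto H atTop (𝓝 0) := by
    have h1t : Tendsto (fun v => Fh v 0) atTop (𝓝[Icc (0:ℝ) 1] 1) := by
      rw [tendsto_nhdsWithin_iff]
      refine ⟨hlim 0 le_rfl zero_lt_one, ?_⟩
      filter_upwards [eventually_ge_atTop (0:ℝ)] with v hv
      exact Ico_subset_Icc_self (hrange 0 le_rfl zero_lt_one v hv)
    have := (hhcont 1 (right_mem_Icc.mpr zero_le_one)).tendsto.comp h1t
    rwa [hh1] at this
  have htail : Tendsto (fun t => ∫ u in t..(t+T), H u) atTop (𝓝 0) := by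
    rw [NormedAddCommGroup.tendsto_nhds_zero]
    intro ε hε
    have hT1 : (0:ℝ) < T + 1 := by linarith
    have hδ : 0 < ε / (T + 1) := div_pos hε hT1
    obtain ⟨t0, ht0⟩ := eventually_atTop.mp
      (NormedAddCommGroup.tendsto_nhds_zero.mp hH0 (ε/(T+1)) hδ)
    filter_upwards [eventually_ge_atTop (max t0 0)] with t htt
    have ht00 : t0 ≤ t := le_trans (le_max_left _ _) htt
    have hb : ‖∫ u in t..(t+T), H u‖ ≤ (ε/(T+1)) * |t + T - t| := by
      apply intervalIntegral.norm_integral_le_of_norm_le_const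
      intro x hx
      rw [uIoc_of_le (by linarith : t ≤ t + T)] at hx
      exact (ht0 x (le_trans ht00 hx.1.le)).le
    have : (ε/(T+1)) * |t + T - t| = ε * T / (T + 1) := by
      rw [abs_of_nonneg (by linarith : (0:ℝ) ≤ t + T - t)]
      ring_nf
    rw [this] at hb
    have hlt : ε * T / (T + 1) < ε := by
      rw [div_lt_iff₀ hT1]
      nlinarith
    exact lt_of_le_of_lt hb hlt
  -- change of variables
  have hchg : (∫ u in (0:ℝ)..T, H u) = - ∫ x in (0:ℝ)..s, |h x| / f x := by
    have hicc : uIcc (0:ℝ) T = Icc 0 T := uIcc_of_le hT0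
    have himg : (fun u => Fh u 0) '' uIcc (0:ℝ) T ⊆ Ico (0:ℝ) 1 := by
      rintro _ ⟨u, hu, rfl⟩
      rw [hicc] at hu
      exact hrange 0 le_rfl zero_lt_one u hu.1
    have hderiv : ∀ u ∈ uIcc (0:ℝ) T, HasDerivAt (fun v => Fh v 0) (f (Fh u 0)) u := by
      intro u hu
      rw [hicc] at hu
      exact hode 0 le_rfl zero_lt_one u hu.1
    have hcont' : ContinuousOn (fun u => f (Fh u 0)) (uIcc (0:ℝ) T) := by
      rw [hicc]
      exact hfcont.comp (hF0cont T hT0) (fun u hu => hrange 0 le_rfl zero_lt_one u hu.1)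
    have hgdiv : ContinuousOn (fun x => h x / f x) ((fun u => Fh u 0) '' uIcc (0:ℝ) T) :=
      ((hhcont.mono Ico_subset_Icc_self).div hfcont hfne).mono himg
    have hcv := intervalIntegral.integral_comp_smul_deriv' hderiv hcont' hgdiv
    rw [hflow0, hFT] at hcv
    have h1 : (∫ u in (0:ℝ)..T, H u) =
        ∫ u in (0:ℝ)..T, f (Fh u 0) • ((fun x => h x / f x) ∘ (fun v => Fh v 0)) u := by
      apply intervalIntegral.integral_congr
      intro u hu
      rw [hicc] at hu
      have hF := hrange 0 le_rfl zero_lt_one u hu.1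
      simp only [hHdef, Function.comp, smul_eq_mul]
      rw [mul_comm]
      exact (div_mul_cancel₀ _ (hfne _ hF)).symm
    rw [h1, hcv]
    have h2 : (∫ x in (0:ℝ)..s, h x / f x) = ∫ x in (0:ℝ)..s, -(|h x| / f x) := by
      apply intervalIntegral.integral_congr
      intro x hx
      rw [uIcc_of_le hs] at hx
      show h x / f x = -(|h x| / f x)
      rw [abs_of_nonpos (hhneg x hx.1 (lt_of_le_of_lt hx.2 hs1))]
      ring
    rw [h2, intervalIntegral.integral_neg]
  -- conclude
  have hAlim : Tendsto (fun t => ∫ u in (0:ℝ)..t, (h (Fh u s) - h (Fh u 0))) atTop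
      (𝓝 (∫ x in (0:ℝ)..s, |h x| / f x)) := by
    have h5 := htail.sub_const (∫ u in (0:ℝ)..T, H u)
    rw [zero_sub, hchg, neg_neg] at h5
    apply h5.congr'
    filter_upwards [eventually_ge_atTop (0:ℝ)] with t ht
    rw [hA t ht, hchg]
  exact ((Real.continuous_exp.continuousAt.tendsto).comp hAlim).const_mul s
end
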